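/- arXiv:1406.3594 — 7 statements merged into one kernel-verified Lean document; each statement's English description precedes it below -/
import Mathlib

section
/- Let p be a prime, ε > 0, and let x ∈ (0,1) be irrational with x ∈ Bad_ε; set N = ⌊ε⁻¹⌋ + 1. Let q_n and q_{n+1} be the denominators of two consecutive convergents of the continued fraction expansion of x. Then for all integers a, b, writing r = |a·q_n + b·q_{n+1}|, one has r·|r|_p·‖r·x‖ ≤ 4·max(a², b²)·(N+1)·|r|_p. -/
open Matrix Filter

/-- The matrix `A_a = [[0,1],[1,a]]` associated to a letter `a`. -/
def Amat (a : ℕ) : Matrix (Fin 2) (Fin 2) ℤ := !![0, 1; 1, (a : ℤ)]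

/-- The matrix `A_u` associated to a finite word `u` (product of the `A_a`). -/
def Aword (u : List ℕ) : Matrix (Fin 2) (Fin 2) ℤ := (u.map Amat).prod

/-- The prefix of length `n` of an infinite word `w`. -/
def wordPrefix (w : ℕ → ℕ) (n : ℕ) : List ℕ := (List.range n).map w

/-- The left shift `T^m w` of an infinite word. -/
def shiftW (w : ℕ → ℕ) (m : ℕ) : ℕ → ℕ := fun i => w (m + i)

/-- Distance from a real number to the nearest integer. -/
noncomputable def distNearestInt (t : ℝ) : ℝ := |t - round t|

/-- `q ∈ PBad_ε` : `q` is a `p`-adically badly approximable vector with constant `ε`. -/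
def PBadE (p : ℕ) [Fact p.Prime] (ε : ℝ) (q : Fin 2 → ℚ_[p]) : Prop :=
  ∀ a b : ℤ, ¬(a = 0 ∧ b = 0) →
    ε / max ((a : ℝ) ^ 2) ((b : ℝ) ^ 2) ≤
      ‖(a : ℚ_[p]) * q 0 + (b : ℚ_[p]) * q 1‖ / max ‖q 0‖ ‖q 1‖

/-- An integer matrix viewed as a matrix over `ℚ_[p]`. -/
noncomputable def matQ (p : ℕ) [Fact p.Prime] (M : Matrix (Fin 2) (Fin 2) ℤ) :
    Matrix (Fin 2) (Fin 2) ℚ_[p] := M.map Int.cast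

/-- `(w, y) ∈ LMad_ε`. -/
def LMadE (p : ℕ) [Fact p.Prime] (ε : ℝ) (w : ℕ → ℕ) (y : Fin 2 → ℚ_[p]) : Prop :=
  (∀ n, 1 ≤ w n ∧ (w n : ℤ) ≤ ⌊ε⁻¹⌋ + 1) ∧
  ∀ n : ℕ, PBadE p ε (Matrix.mulVec (matQ p (Aword (wordPrefix w n))ᵀ) y)

/-- `(w, y) ∈ LMad`. -/
def LMad (p : ℕ) [Fact p.Prime] (w : ℕ → ℕ) (y : Fin 2 → ℚ_[p]) : Prop :=
  ∃ ε > 0, LMadE p ε w y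

/-- The projective distance `d` on nonzero vectors of `ℚ_[p]²`. -/
noncomputable def pdist (p : ℕ) [Fact p.Prime] (u v : Fin 2 → ℚ_[p]) : ℝ :=
  ‖u 0 * v 1 - u 1 * v 0‖ / (max ‖u 0‖ ‖u 1‖ * max ‖v 0‖ ‖v 1‖)

/-- `q ∈ B_k(w, y)` : `q` is `p^{-k}`-close to some `(A_{w_n})ᵀ y`. -/
def inBk (p : ℕ) [Fact p.Prime] (k : ℕ) (w : ℕ → ℕ) (y : Fin 2 → ℚ_[p])
    (q : Fin 2 → ℚ_[p]) : Prop :=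
  q ≠ 0 ∧ ∃ n : ℕ,
    pdist p q (Matrix.mulVec (matQ p (Aword (wordPrefix w n))ᵀ) y) ≤ (p : ℝ) ^ (-(k : ℤ))

/-- `U_k(w)` : set of reductions mod `p^k` of the matrices of all prefixes of `w`. -/
def Uk (p k : ℕ) (w : ℕ → ℕ) : Set (Matrix (Fin 2) (Fin 2) (ZMod (p ^ k))) :=
  { M | ∃ n : ℕ, M = (Aword (wordPrefix w n)).map Int.cast }

/-- The finite word `u` occurs in `w` at position `m`. -/
def occursAt (w : ℕ → ℕ) (u : List ℕ) (m : ℕ) : Prop :=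
  u = (List.range u.length).map fun i => w (m + i)

/-- `u` is a factor of the infinite word `w`. -/
def IsFactor (u : List ℕ) (w : ℕ → ℕ) : Prop := ∃ m, occursAt w u m

/-- `w` is recurrent: every factor occurs infinitely often. -/
def Recurrent (w : ℕ → ℕ) : Prop :=
  ∀ u : List ℕ, IsFactor u w → ∀ M : ℕ, ∃ m, M ≤ m ∧ occursAt w u m

/-- `w` is uniformly recurrent: recurrent with bounded gaps between occurrences. -/
def UniformlyRecurrent (w : ℕ → ℕ) : Prop :=
  Recurrent w ∧
    ∀ u : List ℕ, IsFactor u w →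
      ∃ d : ℕ, ∀ m : ℕ, ∃ m', m ≤ m' ∧ m' ≤ m + d ∧ occursAt w u m'

/-- The complexity `P(w, n)` : number of distinct factors of `w` of length `n`. -/
noncomputable def complexity (w : ℕ → ℕ) (n : ℕ) : ℕ :=
  Set.ncard { u : List ℕ | u.length = n ∧ IsFactor u w }

/-- `a` is the sequence of partial quotients of the continued fraction expansion of `x`,
obtained by iterating the Gauss map. -/
def IsCFSeq (x : ℝ) (a : ℕ → ℕ) : Prop :=
  ∃ ξ : ℕ → ℝ, ξ 0 = x ∧
    ∀ n, (0 < ξ n ∧ ξ n < 1) ∧ ((a n : ℤ) = ⌊(ξ n)⁻¹⌋) ∧ ξ (n + 1) = (ξ n)⁻¹ - (a n : ℝ)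

/-- `Q` is the (index-shifted) sequence of denominators of the convergents of the continued
fraction with partial quotients `a` : `Q (n+1)` is the paper's `q_n`. -/
def IsCFDen (a : ℕ → ℕ) (Q : ℕ → ℤ) : Prop :=
  Q 0 = 0 ∧ Q 1 = 1 ∧ ∀ n, Q (n + 2) = (a n : ℤ) * Q (n + 1) + Q n

/-!
Let `ξ_m` be the Gauss-map iterates of `x`. Then
`x = (p_m + p_{m-1} ξ_m) / (q_m + q_{m-1} ξ_m)` and `p_m q_{m-1} - p_{m-1} q_m = ±1`, so
`|q_m x - p_m| = ξ_m / (q_m + q_{m-1} ξ_m) ≤ 1 / q_{m+1}` because `a_m ξ_m ≤ 1`.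
For `r = |a q_n + b q_{n+1}|` this gives `r ≤ (|a| + |b|) q_{n+1}` and, approximating `r x` by
`±(a p_n + b p_{n+1})`, `‖r x‖ ≤ (|a| + |b|) / q_{n+1}`; hence
`r ‖r x‖ ≤ (|a| + |b|)² ≤ 4 max(a², b²)`; the factors `N + 1 ≥ 1` and `|r|_p ≥ 0` are harmless.
-/

-- Shifted like `IsCFDen`: `cfNum a (n + 1)` is the paper's `p_n`.
def cfNum (a : ℕ → ℕ) : ℕ → ℤ
  | 0 => 1
  | 1 => 0
  | n + 2 => (a n : ℤ) * cfNum a (n + 1) + cfNum a n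

theorem IsCFSeq.one_le {x : ℝ} {a : ℕ → ℕ} (ha : IsCFSeq x a) (m : ℕ) : 1 ≤ a m := by
  obtain ⟨ξ, -, hξ⟩ := ha
  obtain ⟨⟨hpos, hlt⟩, hfl, -⟩ := hξ m
  have : (1 : ℤ) ≤ a m := hfl ▸ Int.le_floor.mpr (by push_cast; exact (one_le_inv₀ hpos).mpr hlt.le)
  exact_mod_cast this

namespace IsCFDen

variable {a : ℕ → ℕ} {Q : ℕ → ℤ}

theorem nonneg (hQ : IsCFDen a Q) : ∀ m, 0 ≤ Q m
  | 0 => by simp [hQ.1]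
  | 1 => by simp [hQ.2.1]
  | m + 2 => by
    rw [hQ.2.2]
    exact add_nonneg (mul_nonneg (Int.natCast_nonneg _) (hQ.nonneg (m + 1))) (hQ.nonneg m)

theorem one_le_succ (hQ : IsCFDen a Q) (ha : ∀ m, 1 ≤ a m) (m : ℕ) : 1 ≤ Q (m + 1) := by
  induction m with
  | zero => simp [hQ.2.1]
  | succ m ih =>
    rw [hQ.2.2]
    have : (1 : ℤ) ≤ a m := by exact_mod_cast ha m
    nlinarith [hQ.nonneg m]

theorem le_succ (hQ : IsCFDen a Q) (ha : ∀ m, 1 ≤ a m) (m : ℕ) : Q (m + 1) ≤ Q (m + 2) := by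
  rw [hQ.2.2]
  have : (1 : ℤ) ≤ a m := by exact_mod_cast ha m
  nlinarith [hQ.nonneg m, hQ.nonneg (m + 1)]

theorem cfNum_mul_sub_mul_cfNum (hQ : IsCFDen a Q) (m : ℕ) :
    cfNum a (m + 1) * Q m - cfNum a m * Q (m + 1) = (-1) ^ (m + 1) := by
  induction m with
  | zero => simp [hQ.1, hQ.2.1, cfNum]
  | succ m ih =>
    rw [hQ.2.2, cfNum, pow_succ]
    linear_combination (-1 : ℤ) * ih

theorem den_add_mul_mul_eq_cfNum_add_mul (hQ : IsCFDen a Q) {x : ℝ} {ξ : ℕ → ℝ} (hξ0 : ξ 0 = x)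
    (hξ : ∀ m, ξ m ≠ 0 ∧ ξ (m + 1) = (ξ m)⁻¹ - a m) (m : ℕ) :
    ((Q (m + 1) : ℝ) + Q m * ξ m) * x = cfNum a (m + 1) + cfNum a m * ξ m := by
  induction m with
  | zero => simp [hQ.1, hQ.2.1, cfNum, hξ0]
  | succ m ih =>
    rw [hQ.2.2, cfNum, (hξ m).2]
    push_cast
    field_simp [(hξ m).1]
    linear_combination ih

theorem abs_mul_sub_cfNum_le (hQ : IsCFDen a Q) {x : ℝ} (ha : IsCFSeq x a) (m : ℕ) :
    |(Q (m + 1) : ℝ) * x - cfNum a (m + 1)| ≤ 1 / Q (m + 2) := by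
  have hQ1 : (1 : ℝ) ≤ Q (m + 1) := by exact_mod_cast hQ.one_le_succ ha.one_le m
  have hQ0 : (0 : ℝ) ≤ Q m := by exact_mod_cast hQ.nonneg m
  have hQ12 : (Q (m + 1) : ℝ) ≤ Q (m + 2) := by exact_mod_cast hQ.le_succ ha.one_le m
  obtain ⟨ξ, hξ0, hξ⟩ := ha
  obtain ⟨⟨hpos, -⟩, hfl, -⟩ := hξ m
  have hid := hQ.den_add_mul_mul_eq_cfNum_add_mul hξ0 (fun k => ⟨(hξ k).1.1.ne', (hξ k).2.2⟩) m
  set D := (Q (m + 1) : ℝ) + Q m * ξ m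
  have hD : 0 < D := by positivity
  have herr : (Q (m + 1) : ℝ) * x - cfNum a (m + 1) =
      ξ m * ((Q (m + 1) : ℝ) * cfNum a m - cfNum a (m + 1) * Q m) / D := by
    rw [eq_div_iff hD.ne']
    linear_combination (Q (m + 1) : ℝ) * hid
  have hdet : |(Q (m + 1) : ℝ) * cfNum a m - cfNum a (m + 1) * Q m| = 1 := by
    rw [show (Q (m + 1) : ℝ) * cfNum a m - cfNum a (m + 1) * Q m =
        -((cfNum a (m + 1) * Q m - cfNum a m * Q (m + 1) : ℤ) : ℝ) by push_cast; ring,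
      hQ.cfNum_mul_sub_mul_cfNum]
    simp
  have haξ : (a m : ℝ) * ξ m ≤ 1 := by
    have : ((a m : ℤ) : ℝ) ≤ (ξ m)⁻¹ := hfl ▸ Int.floor_le _
    rw [← le_div_iff₀ hpos, one_div]
    exact_mod_cast this
  have hQ2 : (Q (m + 2) : ℝ) = a m * Q (m + 1) + Q m := by exact_mod_cast hQ.2.2 m
  rw [herr, abs_div, abs_mul, hdet, abs_of_pos hpos, abs_of_pos hD, mul_one,
    div_le_div_iff₀ hD (by linarith), hQ2]
  nlinarith

end IsCFDen

theorem distNearestInt_abs_mul_le (e k : ℤ) (x : ℝ) :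
    distNearestInt (((|e| : ℤ) : ℝ) * x) ≤ |(e : ℝ) * x - k| := by
  rcases abs_choice e with h | h <;> rw [h]
  · exact round_le _ k
  · calc distNearestInt (((-e : ℤ) : ℝ) * x) ≤ |((-e : ℤ) : ℝ) * x - ((-k : ℤ) : ℝ)| :=
          round_le _ (-k)
      _ = |(e : ℝ) * x - k| := by rw [← abs_neg]; push_cast; ring_nf

theorem abs_add_mul_distNearestInt_le {x : ℝ} {q₁ q₂ p₁ p₂ : ℤ} (hq₁ : 0 ≤ q₁) (hq : q₁ ≤ q₂)
    (h₁ : |(q₁ : ℝ) * x - p₁| ≤ 1 / q₂) (h₂ : |(q₂ : ℝ) * x - p₂| ≤ 1 / q₂) (u v : ℤ) :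
    ((|u * q₁ + v * q₂| : ℤ) : ℝ) * distNearestInt (((|u * q₁ + v * q₂| : ℤ) : ℝ) * x) ≤
      (|(u : ℝ)| + |(v : ℝ)|) ^ 2 := by
  have hq₁' : (0 : ℝ) ≤ q₁ := by exact_mod_cast hq₁
  have hq' : (q₁ : ℝ) ≤ q₂ := by exact_mod_cast hq
  have hr : ((|u * q₁ + v * q₂| : ℤ) : ℝ) ≤ (|(u : ℝ)| + |(v : ℝ)|) * q₂ := by
    push_cast
    calc |(u : ℝ) * q₁ + v * q₂| ≤ |(u : ℝ)| * q₁ + |(v : ℝ)| * q₂ := by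
          simpa only [abs_mul, abs_of_nonneg hq₁', abs_of_nonneg (hq₁'.trans hq')] using
            abs_add_le ((u : ℝ) * q₁) ((v : ℝ) * q₂)
      _ ≤ (|(u : ℝ)| + |(v : ℝ)|) * q₂ := by nlinarith [abs_nonneg (u : ℝ)]
  have hd : distNearestInt (((|u * q₁ + v * q₂| : ℤ) : ℝ) * x) ≤ (|(u : ℝ)| + |(v : ℝ)|) / q₂ :=
    calc _ ≤ |((u * q₁ + v * q₂ : ℤ) : ℝ) * x - ((u * p₁ + v * p₂ : ℤ) : ℝ)| :=
          distNearestInt_abs_mul_le _ _ _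
      _ = |u * ((q₁ : ℝ) * x - p₁) + v * ((q₂ : ℝ) * x - p₂)| := by push_cast; ring_nf
      _ ≤ |(u : ℝ)| * (1 / q₂) + |(v : ℝ)| * (1 / q₂) := by
          refine (abs_add_le _ _).trans ?_
          rw [abs_mul, abs_mul]
          gcongr
      _ = (|(u : ℝ)| + |(v : ℝ)|) / q₂ := by ring
  calc _ ≤ ((|(u : ℝ)| + |(v : ℝ)|) * q₂) * ((|(u : ℝ)| + |(v : ℝ)|) / q₂) :=
        mul_le_mul hr hd (abs_nonneg _) (mul_nonneg (by positivity) (hq₁'.trans hq'))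
    _ = (|(u : ℝ)| + |(v : ℝ)|) ^ 2 * (q₂ / q₂) := by ring
    _ ≤ (|(u : ℝ)| + |(v : ℝ)|) ^ 2 := mul_le_of_le_one_right (sq_nonneg _) (div_self_le_one _)

theorem abs_add_abs_sq_le (s t : ℝ) : (|s| + |t|) ^ 2 ≤ 4 * max (s ^ 2) (t ^ 2) := by
  nlinarith [sq_nonneg (|s| - |t|), sq_abs s, sq_abs t, le_max_left (s ^ 2) (t ^ 2),
    le_max_right (s ^ 2) (t ^ 2)]

theorem stmt_0_general (p : ℕ) [Fact p.Prime] (ε : ℝ) (hε : 0 < ε)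
    (x : ℝ) (a : ℕ → ℕ) (ha : IsCFSeq x a) (Q : ℕ → ℤ) (hQ : IsCFDen a Q)
    (n : ℕ) (u v : ℤ) (r : ℤ) (hr : r = |u * Q (n + 1) + v * Q (n + 2)|) :
    (r : ℝ) * ‖((r : ℤ) : ℚ_[p])‖ * distNearestInt ((r : ℝ) * x) ≤
      4 * max ((u : ℝ) ^ 2) ((v : ℝ) ^ 2) * (((⌊ε⁻¹⌋ + 1 : ℤ) : ℝ) + 1) *
        ‖((r : ℤ) : ℚ_[p])‖ := by
  have hrx : (r : ℝ) * distNearestInt ((r : ℝ) * x) ≤ 4 * max ((u : ℝ) ^ 2) ((v : ℝ) ^ 2) := by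
    subst hr
    have hQ2 : (0 : ℝ) < Q (n + 2) := by exact_mod_cast hQ.one_le_succ ha.one_le (n + 1)
    have hQ23 : (Q (n + 2) : ℝ) ≤ Q (n + 3) := by exact_mod_cast hQ.le_succ ha.one_le (n + 1)
    have h₂ := (hQ.abs_mul_sub_cfNum_le ha (n + 1)).trans (one_div_le_one_div_of_le hQ2 hQ23)
    exact (abs_add_mul_distNearestInt_le (hQ.nonneg _) (hQ.le_succ ha.one_le n)
      (hQ.abs_mul_sub_cfNum_le ha n) h₂ u v).trans (abs_add_abs_sq_le _ _)
  have hN : (1 : ℝ) ≤ ((⌊ε⁻¹⌋ + 1 : ℤ) : ℝ) + 1 := by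
    have : (0 : ℝ) ≤ ⌊ε⁻¹⌋ := by exact_mod_cast Int.floor_nonneg.mpr (inv_pos.mpr hε).le
    push_cast
    linarith
  calc _ = (r : ℝ) * distNearestInt ((r : ℝ) * x) * ‖((r : ℤ) : ℚ_[p])‖ := by ring
    _ ≤ _ := mul_le_mul_of_nonneg_right (hrx.trans (le_mul_of_one_le_right (by positivity) hN))
      (norm_nonneg _)

/-- bound for `r·|r|_p·‖r x‖` when `r` is an integer combination of two
consecutive convergent denominators of a `Bad_ε` number. -/
theorem stmt_0 (p : ℕ) [Fact p.Prime] (ε : ℝ) (hε : 0 < ε)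
    (x : ℝ) (hxirr : Irrational x) (hx0 : 0 < x) (hx1 : x < 1)
    (hBad : ∀ q : ℕ, 1 ≤ q → ε ≤ (q : ℝ) * distNearestInt ((q : ℝ) * x))
    (a : ℕ → ℕ) (ha : IsCFSeq x a) (Q : ℕ → ℤ) (hQ : IsCFDen a Q)
    (n : ℕ) (u v : ℤ) (r : ℤ) (hr : r = |u * Q (n + 1) + v * Q (n + 2)|) :
    (r : ℝ) * ‖((r : ℤ) : ℚ_[p])‖ * distNearestInt ((r : ℝ) * x) ≤
      4 * max ((u : ℝ) ^ 2) ((v : ℝ) ^ 2) * (((⌊ε⁻¹⌋ + 1 : ℤ) : ℝ) + 1) *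
        ‖((r : ℤ) : ℚ_[p])‖ :=
  stmt_0_general p ε hε x a ha Q hQ n u v r hr
end

section
/- Let p be a prime, k ≥ 1, and let A, B be 2×2 matrices over ℤ_p, each with determinant 1 or −1, such that every entry of A − B has p-adic absolute value at most p^{−k}. Then for all nonzero vectors u, v ∈ ℚ_p²: d(A·u, v) ≤ max(d(B·u, v), p^{−k}). -/
/-!
Matrices over `ℤ_[p]` with unit determinant act isometrically on `ℚ_[p]²` for the sup norm,
because their inverses again have entries in `ℤ_[p]`. Hence `d(Au, v)` and `d(Bu, v)` have the
same denominator `‖u‖ ‖v‖`, and their numerators `Au ∧ v` and `Bu ∧ v` differ by `(A - B)u ∧ v`,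
whose norm is at most `p^{-k} ‖u‖ ‖v‖`. The ultrametric inequality finishes the proof.
-/

open Matrix Filter

theorem norm_fin_two_eq_max {E : Type*} [SeminormedAddCommGroup E] (x : Fin 2 → E) :
    ‖x‖ = max ‖x 0‖ ‖x 1‖ :=
  le_antisymm
    ((pi_norm_le_iff_of_nonneg (by positivity)).2 <| Fin.forall_fin_two.2
      ⟨le_max_left _ _, le_max_right _ _⟩)
    (max_le (norm_le_pi_norm x 0) (norm_le_pi_norm x 1))

section Ultrametric

variable {K : Type*} [NormedField K] [IsUltrametricDist K]

theorem norm_mulVec_le_of_forall_norm_le {m n : Type*} [Fintype m] [Fintype n]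
    {M : Matrix m n K} {c : ℝ} (hc : 0 ≤ c) (hM : ∀ i j, ‖M i j‖ ≤ c) (u : n → K) :
    ‖M *ᵥ u‖ ≤ c * ‖u‖ :=
  (pi_norm_le_iff_of_nonneg (by positivity)).2 fun i =>
    IsUltrametricDist.norm_sum_le_of_forall_le_of_nonneg (by positivity) fun j _ => by
      rw [norm_mul]
      exact mul_le_mul (hM i j) (norm_le_pi_norm u j) (norm_nonneg _) hc

theorem norm_mul_sub_mul_le (x v : Fin 2 → K) : ‖x 0 * v 1 - x 1 * v 0‖ ≤ ‖x‖ * ‖v‖ := by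
  have h := IsUltrametricDist.norm_add_le_max (x 0 * v 1) (-(x 1 * v 0))
  rw [← sub_eq_add_neg, norm_neg] at h
  refine h.trans (max_le ?_ ?_) <;> rw [norm_mul]
  · exact mul_le_mul (norm_le_pi_norm x 0) (norm_le_pi_norm v 1) (norm_nonneg _) (norm_nonneg _)
  · exact mul_le_mul (norm_le_pi_norm x 1) (norm_le_pi_norm v 0) (norm_nonneg _) (norm_nonneg _)

theorem norm_mul_sub_mul_le_max (x y v : Fin 2 → K) :
    ‖x 0 * v 1 - x 1 * v 0‖ ≤ max ‖y 0 * v 1 - y 1 * v 0‖ (‖x - y‖ * ‖v‖) := by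
  have hsplit : x 0 * v 1 - x 1 * v 0 =
      (y 0 * v 1 - y 1 * v 0) + ((x - y) 0 * v 1 - (x - y) 1 * v 0) := by
    simp only [Pi.sub_apply]; ring
  rw [hsplit]
  exact (IsUltrametricDist.norm_add_le_max _ _).trans
    (max_le_max le_rfl (norm_mul_sub_mul_le _ _))

end Ultrametric

theorem div_le_max_div_of_le_max {a b c d : ℝ} (hc : 0 ≤ c) (hd : 0 ≤ d)
    (h : a ≤ max b (c * d)) : a / d ≤ max (b / d) c := by
  rcases hd.eq_or_lt with rfl | hd
  · simp [hc]
  rw [div_le_iff₀ hd, max_mul_of_nonneg _ _ hd.le, div_mul_cancel₀ _ hd.ne']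
  exact h

theorem pdist_eq {p : ℕ} [Fact p.Prime] (u v : Fin 2 → ℚ_[p]) :
    pdist p u v = ‖u 0 * v 1 - u 1 * v 0‖ / (‖u‖ * ‖v‖) := by
  rw [pdist, norm_fin_two_eq_max u, norm_fin_two_eq_max v]

namespace PadicInt

variable {p : ℕ} [Fact p.Prime]

theorem norm_map_coe_mulVec_le {m n : Type*} [Fintype m] [Fintype n]
    (M : Matrix m n ℤ_[p]) (u : n → ℚ_[p]) : ‖M.map ((↑) : ℤ_[p] → ℚ_[p]) *ᵥ u‖ ≤ ‖u‖ := by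
  simpa using norm_mulVec_le_of_forall_norm_le (M := M.map (↑)) zero_le_one
    (fun i j => norm_le_one (M i j)) u

theorem norm_map_coe_mulVec_of_isUnit_det {n : Type*} [Fintype n] [DecidableEq n]
    {M : Matrix n n ℤ_[p]} (hM : IsUnit M.det) (u : n → ℚ_[p]) :
    ‖M.map ((↑) : ℤ_[p] → ℚ_[p]) *ᵥ u‖ = ‖u‖ := by
  refine le_antisymm (norm_map_coe_mulVec_le M u) ?_
  have hinv : M⁻¹.map ((↑) : ℤ_[p] → ℚ_[p]) * M.map (↑) = 1 := by
    change M⁻¹.map Coe.ringHom * M.map Coe.ringHom = 1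
    rw [← Matrix.map_mul, nonsing_inv_mul M hM, Matrix.map_one _ (map_zero _) (map_one _)]
  calc ‖u‖ = ‖M⁻¹.map ((↑) : ℤ_[p] → ℚ_[p]) *ᵥ (M.map (↑) *ᵥ u)‖ := by
        rw [mulVec_mulVec, hinv, one_mulVec]
    _ ≤ ‖M.map ((↑) : ℤ_[p] → ℚ_[p]) *ᵥ u‖ := norm_map_coe_mulVec_le _ _

end PadicInt

theorem stmt_9_general (p : ℕ) [Fact p.Prime] (k : ℕ)
    (A B : Matrix (Fin 2) (Fin 2) ℤ_[p])
    (hA : A.det = 1 ∨ A.det = -1) (hB : B.det = 1 ∨ B.det = -1)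
    (hAB : ∀ i j : Fin 2, ‖A i j - B i j‖ ≤ (p : ℝ) ^ (-(k : ℤ)))
    (u v : Fin 2 → ℚ_[p]) :
    pdist p (Matrix.mulVec (A.map fun z : ℤ_[p] => (z : ℚ_[p])) u) v ≤
      max (pdist p (Matrix.mulVec (B.map fun z : ℤ_[p] => (z : ℚ_[p])) u) v)
        ((p : ℝ) ^ (-(k : ℤ))) := by
  have isUnit_det {M : Matrix (Fin 2) (Fin 2) ℤ_[p]} (h : M.det = 1 ∨ M.det = -1) :
      IsUnit M.det := by
    rcases h with h | h <;> simp [h]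
  set A' := A.map fun z : ℤ_[p] => (z : ℚ_[p])
  set B' := B.map fun z : ℤ_[p] => (z : ℚ_[p])
  have hdiff : ‖A' *ᵥ u - B' *ᵥ u‖ ≤ (p : ℝ) ^ (-(k : ℤ)) * ‖u‖ := by
    rw [← sub_mulVec]
    refine norm_mulVec_le_of_forall_norm_le (by positivity) (fun i j => ?_) u
    simpa only [A', B', Matrix.sub_apply, map_apply, ← PadicInt.coe_sub, ← PadicInt.norm_def]
      using hAB i j
  rw [pdist_eq, pdist_eq, PadicInt.norm_map_coe_mulVec_of_isUnit_det (isUnit_det hA),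
    PadicInt.norm_map_coe_mulVec_of_isUnit_det (isUnit_det hB)]
  refine div_le_max_div_of_le_max (by positivity) (by positivity) ?_
  refine (norm_mul_sub_mul_le_max (A' *ᵥ u) (B' *ᵥ u) v).trans (max_le_max le_rfl ?_)
  rw [← mul_assoc]
  gcongr

/-- if `A ≡ B (mod p^k)` in `SL₂^±(ℤ_p)` then
`d(Au, v) ≤ max (d(Bu, v)) (p^{-k})`. -/
theorem stmt_9 (p : ℕ) [Fact p.Prime] (k : ℕ) (hk : 1 ≤ k)
    (A B : Matrix (Fin 2) (Fin 2) ℤ_[p])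
    (hA : A.det = 1 ∨ A.det = -1) (hB : B.det = 1 ∨ B.det = -1)
    (hAB : ∀ i j : Fin 2, ‖A i j - B i j‖ ≤ (p : ℝ) ^ (-(k : ℤ)))
    (u v : Fin 2 → ℚ_[p]) (hu : u ≠ 0) (hv : v ≠ 0) :
    pdist p (Matrix.mulVec (A.map fun z : ℤ_[p] => (z : ℚ_[p])) u) v ≤
      max (pdist p (Matrix.mulVec (B.map fun z : ℤ_[p] => (z : ℚ_[p])) u) v)
        ((p : ℝ) ^ (-(k : ℤ))) :=
  stmt_9_general p k A B hA hB hAB u v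
end

section
/- Let p be a prime, k ∈ ℕ, δ > 0, and let q = (q₁,q₂) and y = (y₁,y₂) be nonzero vectors in ℚ_p² with d(q, y) ≤ p^{−k}. Then for every pair of integers (u₁,u₂): if |u₁·q₁ + u₂·q₂|_p / max(|q₁|_p,|q₂|_p) ≤ δ, then |u₁·y₁ + u₂·y₂|_p / max(|y₁|_p,|y₂|_p) ≤ max(δ, p^{−k}). -/
open Matrix Filter

/-!
With `L_v = u₁ v₀ + u₂ v₁` and `D = q₀ y₁ - q₁ y₀`, one has the identities
`q₀ L_y = y₀ L_q + u₂ D` and `q₁ L_y = y₁ L_q - u₁ D`. Taking the one for the coordinate where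
`|q_i|_p` is maximal and using the ultrametric inequality together with `|u_j|_p ≤ 1` gives
`|L_y| ‖q‖ ≤ max (|L_q| ‖y‖) |D|`; dividing by `‖q‖ ‖y‖` yields the claim.
-/

section Ultrametric

variable {K : Type*} [NormedField K] [IsUltrametricDist K]

lemma norm_mul_add_mul_le_max {a b c d : K} (hc : ‖c‖ ≤ 1) :
    ‖a * b + c * d‖ ≤ max (‖a‖ * ‖b‖) ‖d‖ := by
  refine (IsUltrametricDist.norm_add_le_max _ _).trans ?_
  rw [norm_mul, norm_mul]
  gcongr
  exact mul_le_of_le_one_left (norm_nonneg d) hc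

lemma norm_linearForm_mul_le {a b : K} (ha : ‖a‖ ≤ 1) (hb : ‖b‖ ≤ 1) (q y : Fin 2 → K) :
    ‖a * y 0 + b * y 1‖ * max ‖q 0‖ ‖q 1‖ ≤
      max (‖a * q 0 + b * q 1‖ * max ‖y 0‖ ‖y 1‖) ‖q 0 * y 1 - q 1 * y 0‖ := by
  rcases max_choice ‖q 0‖ ‖q 1‖ with h | h <;> rw [h, ← norm_mul]
  · calc _ = ‖(a * q 0 + b * q 1) * y 0 + b * (q 0 * y 1 - q 1 * y 0)‖ := by congr 1; ring
      _ ≤ _ := norm_mul_add_mul_le_max hb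
      _ ≤ _ := by gcongr; exact le_max_left _ _
  · calc _ = ‖(a * q 0 + b * q 1) * y 1 + -a * (q 0 * y 1 - q 1 * y 0)‖ := by congr 1; ring
      _ ≤ _ := norm_mul_add_mul_le_max (by rwa [norm_neg])
      _ ≤ _ := by gcongr; exact le_max_right _ _

end Ultrametric

lemma max_norm_pos_of_ne_zero {E : Type*} [NormedAddCommGroup E] {v : Fin 2 → E}
    (hv : v ≠ 0) : 0 < max ‖v 0‖ ‖v 1‖ := by
  obtain ⟨i, hi⟩ := Function.ne_iff.1 hv
  fin_cases i
  · exact lt_max_of_lt_left (norm_pos_iff.2 hi)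
  · exact lt_max_of_lt_right (norm_pos_iff.2 hi)

theorem stmt_10_general (p : ℕ) [Fact p.Prime] (k : ℕ) (δ : ℝ)
    (q y : Fin 2 → ℚ_[p]) (hq : q ≠ 0) (hy : y ≠ 0)
    (hd : pdist p q y ≤ (p : ℝ) ^ (-(k : ℤ)))
    (u₁ u₂ : ℤ)
    (hsmall : ‖(u₁ : ℚ_[p]) * q 0 + (u₂ : ℚ_[p]) * q 1‖ / max ‖q 0‖ ‖q 1‖ ≤ δ) :
    ‖(u₁ : ℚ_[p]) * y 0 + (u₂ : ℚ_[p]) * y 1‖ / max ‖y 0‖ ‖y 1‖ ≤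
      max δ ((p : ℝ) ^ (-(k : ℤ))) := by
  have hMq := max_norm_pos_of_ne_zero hq
  have hMy := max_norm_pos_of_ne_zero hy
  rw [div_le_iff₀ hMq] at hsmall
  rw [pdist, div_le_iff₀ (mul_pos hMq hMy)] at hd
  rw [div_le_iff₀ hMy, ← mul_le_mul_iff_of_pos_right hMq]
  calc _ ≤ max (‖(u₁ : ℚ_[p]) * q 0 + (u₂ : ℚ_[p]) * q 1‖ * max ‖y 0‖ ‖y 1‖)
        ‖q 0 * y 1 - q 1 * y 0‖ :=
        norm_linearForm_mul_le (Padic.norm_int_le_one u₁) (Padic.norm_int_le_one u₂) q y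
    _ ≤ max (δ * max ‖q 0‖ ‖q 1‖ * max ‖y 0‖ ‖y 1‖)
        ((p : ℝ) ^ (-(k : ℤ)) * (max ‖q 0‖ ‖q 1‖ * max ‖y 0‖ ‖y 1‖)) := by gcongr
    _ = _ := by rw [mul_assoc δ, ← max_mul_of_nonneg _ _ (mul_pos hMq hMy).le]; ring

/-- small values of linear forms transfer along `p^{-k}`-close projective
points. -/
theorem stmt_10 (p : ℕ) [Fact p.Prime] (k : ℕ) (δ : ℝ) (hδ : 0 < δ)
    (q y : Fin 2 → ℚ_[p]) (hq : q ≠ 0) (hy : y ≠ 0)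
    (hd : pdist p q y ≤ (p : ℝ) ^ (-(k : ℤ)))
    (u₁ u₂ : ℤ)
    (hsmall : ‖(u₁ : ℚ_[p]) * q 0 + (u₂ : ℚ_[p]) * q 1‖ / max ‖q 0‖ ‖q 1‖ ≤ δ) :
    ‖(u₁ : ℚ_[p]) * y 0 + (u₂ : ℚ_[p]) * y 1‖ / max ‖y 0‖ ‖y 1‖ ≤
      max δ ((p : ℝ) ^ (-(k : ℤ))) :=
  stmt_10_general p k δ q y hq hy hd u₁ u₂ hsmall
end

section
/- Let w be a nonempty finite word over the positive integers, and regard A_w as a complex matrix. Then A_w has two distinct complex eigenvalues, and no eigenvalue of A_w is a root of unity (for every eigenvalue λ ∈ ℂ and every n ≥ 1, λ^n ≠ 1). -/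
open Matrix Filter

/-
`A_u` is an integer matrix with `det A_u = (-1)^|u|`, trace `t ≥ 1`, and `t ≥ 3` as soon as
`|u| ≥ 2`: for `u = a :: v` the trace is `q + r + a s`, where `q, r, s ≥ 1` are the entries of
`A_v` off the upper-left corner. Hence the characteristic polynomial `x² - t x + d`,
`d = ±1`, has discriminant `t² - 4d ≥ 5`: its roots are real and distinct. A real root of unity
is `±1`, and `1 ∓ t + d ≠ 0` in each of the two cases `d = -1, t ≥ 1` and `d = 1, t ≥ 3`.
-/

lemma exists_mulVec_eq_smul_iff_fin_two {K : Type*} [Field K] (M : Matrix (Fin 2) (Fin 2) K)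
    (l : K) : (∃ z : Fin 2 → K, z ≠ 0 ∧ M *ᵥ z = l • z) ↔ l ^ 2 - M.trace * l + M.det = 0 := by
  have hdet : (l • (1 : Matrix (Fin 2) (Fin 2) K) - M).det = l ^ 2 - M.trace * l + M.det := by
    simp only [det_fin_two, trace_fin_two, Matrix.sub_apply, Matrix.smul_apply, one_apply_eq,
      one_apply_ne zero_ne_one, one_apply_ne one_ne_zero, smul_eq_mul]
    ring
  simp_rw [← hdet, ← exists_mulVec_eq_zero_iff, sub_mulVec, smul_mulVec, one_mulVec, sub_eq_zero,
    eq_comm (a := l • _)]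

lemma complex_quadratic_eq_zero_iff {t d : ℝ} (h : 0 < t ^ 2 - 4 * d) (l : ℂ) :
    l ^ 2 - t * l + d = 0 ↔
      l = ((t + √(t ^ 2 - 4 * d)) / 2 : ℝ) ∨ l = ((t - √(t ^ 2 - 4 * d)) / 2 : ℝ) := by
  have hs : discrim (1 : ℂ) (-t) d = (√(t ^ 2 - 4 * d) : ℂ) * (√(t ^ 2 - 4 * d) : ℂ) := by
    rw [← Complex.ofReal_mul, Real.mul_self_sqrt h.le, discrim]
    push_cast
    ring
  rw [show l ^ 2 - t * l + d = 1 * (l * l) + (-t) * l + d by ring,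
    quadratic_eq_zero_iff one_ne_zero hs l]
  push_cast
  ring_nf

lemma Aword_cons (a : ℕ) (v : List ℕ) : Aword (a :: v) = Amat a * Aword v :=
  List.prod_cons

lemma Amat_mul (a : ℕ) (M : Matrix (Fin 2) (Fin 2) ℤ) :
    Amat a * M = !![M 1 0, M 1 1; M 0 0 + a * M 1 0, M 0 1 + a * M 1 1] := by
  ext i j
  fin_cases i <;> fin_cases j <;> simp [Amat, mul_apply, Fin.sum_univ_two]

lemma det_Aword (u : List ℕ) : (Aword u).det = (-1) ^ u.length := by
  induction u with
  | nil => simp [Aword]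
  | cons a v ih =>
    rw [Aword_cons, det_mul, ih]
    simp [Amat, pow_succ']

lemma Aword_entry_bounds {u : List ℕ} (hu : u ≠ []) (hpos : ∀ b ∈ u, 1 ≤ b) :
    0 ≤ Aword u 0 0 ∧ 1 ≤ Aword u 0 1 ∧ 1 ≤ Aword u 1 0 ∧ 1 ≤ Aword u 1 1 := by
  induction u with
  | nil => exact absurd rfl hu
  | cons a v ih =>
    have ha : (1 : ℤ) ≤ a := by exact_mod_cast hpos a List.mem_cons_self
    rcases eq_or_ne v [] with rfl | hv
    · simpa [Aword, Amat] using ha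
    obtain ⟨h00, h01, h10, h11⟩ := ih hv fun b hb => hpos b (List.mem_cons_of_mem a hb)
    simp only [Aword_cons, Amat_mul, of_apply, cons_val', cons_val_zero, cons_val_one,
      empty_val', cons_val_fin_one]
    refine ⟨by omega, h11, by nlinarith, by nlinarith⟩

lemma det_trace_Aword {u : List ℕ} (hu : u ≠ []) (hpos : ∀ b ∈ u, 1 ≤ b) :
    (Aword u).det = -1 ∧ 1 ≤ (Aword u).trace ∨ (Aword u).det = 1 ∧ 3 ≤ (Aword u).trace := by
  rcases u with _ | ⟨a, _ | ⟨b, v⟩⟩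
  · exact absurd rfl hu
  · left
    simpa [Aword, Amat, trace_fin_two] using hpos a List.mem_cons_self
  · have ha : (1 : ℤ) ≤ a := by exact_mod_cast hpos a List.mem_cons_self
    obtain ⟨h00, h01, h10, h11⟩ :=
      Aword_entry_bounds (List.cons_ne_nil b v) fun c hc => hpos c (List.mem_cons_of_mem a hc)
    have htr : 3 ≤ (Aword (a :: b :: v)).trace := by
      rw [Aword_cons a, Amat_mul, trace_fin_two]
      simp only [of_apply, cons_val', cons_val_zero, cons_val_one, empty_val', cons_val_fin_one]
      nlinarith
    rcases neg_one_pow_eq_or ℤ (a :: b :: v).length with h | h <;> rw [← det_Aword] at h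
    · exact .inr ⟨h, htr⟩
    · exact .inl ⟨h, by omega⟩

lemma exists_ne_complex_quadratic_eq_zero {t d : ℝ} (h : 0 < t ^ 2 - 4 * d) :
    ∃ l₁ l₂ : ℂ, l₁ ≠ l₂ ∧ l₁ ^ 2 - t * l₁ + d = 0 ∧ l₂ ^ 2 - t * l₂ + d = 0 := by
  refine ⟨_, _, ?_, (complex_quadratic_eq_zero_iff h _).2 (.inl rfl),
    (complex_quadratic_eq_zero_iff h _).2 (.inr rfl)⟩
  have := Real.sqrt_pos.2 h
  rw [Ne, Complex.ofReal_inj]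
  intro; linarith

lemma pow_ne_one_of_complex_quadratic_eq_zero {t d : ℝ} (h : 0 < t ^ 2 - 4 * d)
    (hone : 1 - t + d ≠ 0) (hneg : 1 + t + d ≠ 0) {l : ℂ} (hl : l ^ 2 - t * l + d = 0) {n : ℕ}
    (hn : n ≠ 0) : l ^ n ≠ 1 := by
  obtain ⟨r, rfl⟩ : ∃ r : ℝ, l = r :=
    ((complex_quadratic_eq_zero_iff h l).1 hl).elim (⟨_, ·⟩) (⟨_, ·⟩)
  have hr : r ^ 2 - t * r + d = 0 := by exact_mod_cast hl
  intro hpow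
  rcases pow_eq_one_iff_cases.1 (show r ^ n = 1 by exact_mod_cast hpow) with hn0 | rfl | ⟨rfl, -⟩
  · exact hn hn0
  · exact hone (by linarith)
  · exact hneg (by linarith)

/-- for a nonempty word `u` over the positive integers, `A_u` has two
distinct complex eigenvalues and no eigenvalue of `A_u` is a root of unity. -/
theorem stmt_11 (u : List ℕ) (hu : u ≠ []) (hpos : ∀ b ∈ u, 1 ≤ b) :
    (∃ l₁ l₂ : ℂ, l₁ ≠ l₂ ∧
      (∃ z : Fin 2 → ℂ, z ≠ 0 ∧
        Matrix.mulVec ((Aword u).map (Int.cast : ℤ → ℂ)) z = l₁ • z) ∧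
      (∃ z : Fin 2 → ℂ, z ≠ 0 ∧
        Matrix.mulVec ((Aword u).map (Int.cast : ℤ → ℂ)) z = l₂ • z)) ∧
    ∀ l : ℂ,
      (∃ z : Fin 2 → ℂ, z ≠ 0 ∧
        Matrix.mulVec ((Aword u).map (Int.cast : ℤ → ℂ)) z = l • z) →
      ∀ n : ℕ, 1 ≤ n → l ^ n ≠ 1 := by
  set t : ℝ := ((Aword u).trace : ℝ)
  set d : ℝ := ((Aword u).det : ℝ)
  have heig (l : ℂ) : (∃ z : Fin 2 → ℂ, z ≠ 0 ∧ (Aword u).map (Int.cast : ℤ → ℂ) *ᵥ z = l • z) ↔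
      l ^ 2 - t * l + d = 0 := by
    rw [exists_mulVec_eq_smul_iff_fin_two, ← Int.cast_det]
    simp [t, d, trace_fin_two]
  have htd : 0 < (Aword u).trace ^ 2 - 4 * (Aword u).det ∧
      1 - (Aword u).trace + (Aword u).det ≠ 0 ∧ 1 + (Aword u).trace + (Aword u).det ≠ 0 := by
    rcases det_trace_Aword hu hpos with ⟨hd, ht⟩ | ⟨hd, ht⟩ <;> rw [hd] <;>
      exact ⟨by nlinarith, by omega, by omega⟩
  obtain ⟨hdisc, hone, hneg⟩ : 0 < t ^ 2 - 4 * d ∧ 1 - t + d ≠ 0 ∧ 1 + t + d ≠ 0 := by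
    simp only [t, d]
    exact_mod_cast htd
  simp only [heig]
  exact ⟨exists_ne_complex_quadratic_eq_zero hdisc, fun l hl n hn =>
    pow_ne_one_of_complex_quadratic_eq_zero hdisc hone hneg hl (by omega)⟩
end

section
/- Let p be a prime, k ≥ 1, and let w be a recurrent infinite word over ℕ. Then there exists m ≥ 1 such that A_{w_m} is congruent to the identity matrix modulo p^k, i.e. φ_k(A_{w_m}) = Id over ℤ/p^kℤ. -/
open Matrix Filter

/-
Reduction modulo `p^k` sends every `A_a` into the finite group `GL₂(ℤ/p^kℤ)`, so it suffices
that prefix products of a recurrent word in a finite group `G` hit `1`. Recurrence lets each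
prefix reappear later, so one builds lengths `n₀ < n₁ < ⋯` with each prefix `w_{nᵢ}` a suffix of
the next, hence of all later ones. By pigeonhole two of the products agree, `g(w_{nᵢ}) = g(w_{nⱼ})`
with `i < j`; since `w_{nⱼ} = w_{nⱼ - nᵢ} w_{nᵢ}`, cancelling gives `g(w_{nⱼ - nᵢ}) = 1`.
-/

lemma wordPrefix_add (w : ℕ → ℕ) (m n : ℕ) :
    wordPrefix w (m + n) = wordPrefix w m ++ wordPrefix (shiftW w m) n := by
  simp [wordPrefix, shiftW, List.range_add, List.map_map, Function.comp_def]

lemma length_wordPrefix (w : ℕ → ℕ) (n : ℕ) : (wordPrefix w n).length = n := by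
  simp [wordPrefix]

lemma wordPrefix_eq_append_of_isSuffix {w : ℕ → ℕ} {a b : ℕ} (hab : a ≤ b)
    (h : wordPrefix w a <:+ wordPrefix w b) :
    wordPrefix w b = wordPrefix w (b - a) ++ wordPrefix w a := by
  obtain ⟨t, ht⟩ := h
  have hsplit : wordPrefix w b = wordPrefix w (b - a) ++ wordPrefix (shiftW w (b - a)) a := by
    rw [← wordPrefix_add, Nat.sub_add_cancel hab]
  have ht_len : t.length = b - a := by
    have := congrArg List.length ht
    simp only [List.length_append, length_wordPrefix] at this
    omega
  obtain ⟨rfl, -⟩ := List.append_inj (ht.trans hsplit) (by rw [ht_len, length_wordPrefix])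
  exact ht.symm

lemma Recurrent.exists_wordPrefix_add_eq_append {w : ℕ → ℕ} (hw : Recurrent w) (L : ℕ) :
    ∃ m, 1 ≤ m ∧ wordPrefix w (m + L) = wordPrefix w m ++ wordPrefix w L := by
  have hfactor : IsFactor (wordPrefix w L) w := ⟨0, by simp [occursAt, wordPrefix]⟩
  obtain ⟨m, hm, hocc⟩ := hw _ hfactor 1
  rw [occursAt, length_wordPrefix] at hocc
  exact ⟨m, hm, by rw [wordPrefix_add]; exact congrArg _ hocc.symm⟩

theorem Recurrent.exists_prod_map_wordPrefix_eq_one {G : Type*} [Group G] [Finite G]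
    {w : ℕ → ℕ} (hw : Recurrent w) (f : ℕ → G) :
    ∃ m, 1 ≤ m ∧ ((wordPrefix w m).map f).prod = 1 := by
  choose gap hgap_pos hgap using hw.exists_wordPrefix_add_eq_append
  let n : ℕ → ℕ := fun i => Nat.rec 0 (fun _ L => gap L + L) i
  have hn_succ (i : ℕ) : n (i + 1) = gap (n i) + n i := rfl
  have hn_mono : StrictMono n := strictMono_nat_of_lt_succ fun i => by
    have := hgap_pos (n i)
    rw [hn_succ]
    omega
  have hn_suffix : ∀ ⦃i j⦄, i < j → wordPrefix w (n i) <:+ wordPrefix w (n j) :=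
    Nat.rel_of_forall_rel_succ_of_lt (fun s t : List ℕ => s <:+ t) fun i => by
      rw [hn_succ, hgap]
      exact List.suffix_append _ _
  obtain ⟨i, j, hne, heq⟩ :=
    Finite.exists_ne_map_eq_of_infinite fun i => ((wordPrefix w (n i)).map f).prod
  wlog hij : i < j generalizing i j
  · exact this j i hne.symm heq.symm (by omega)
  refine ⟨n j - n i, by have := hn_mono hij; omega, ?_⟩
  rw [wordPrefix_eq_append_of_isSuffix (hn_mono hij).le (hn_suffix hij), List.map_append,
    List.prod_append] at heq
  simpa using heq

lemma isUnit_map_Amat (R : Type*) [CommRing R] (a : ℕ) :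
    IsUnit ((Amat a).map (Int.cast : ℤ → R)) := by
  rw [Matrix.isUnit_iff_isUnit_det, Matrix.det_fin_two]
  simp [Amat]

lemma map_Aword {R : Type*} [CommRing R] (u : List ℕ) :
    (Aword u).map (Int.cast : ℤ → R) = (u.map fun a => (Amat a).map (Int.cast : ℤ → R)).prod :=
  (map_list_prod (Int.castRingHom R).mapMatrix (u.map Amat)).trans (by rw [List.map_map]; rfl)

theorem Recurrent.exists_map_Aword_wordPrefix_eq_one (R : Type*) [CommRing R] [Finite R]
    {w : ℕ → ℕ} (hw : Recurrent w) :
    ∃ m, 1 ≤ m ∧ (Aword (wordPrefix w m)).map (Int.cast : ℤ → R) = 1 := by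
  obtain ⟨m, hm, h⟩ := hw.exists_prod_map_wordPrefix_eq_one fun a => (isUnit_map_Amat R a).unit
  refine ⟨m, hm, ?_⟩
  have hval := congrArg (Units.coeHom _) h
  rw [map_list_prod, List.map_map, map_one] at hval
  simpa [map_Aword, Function.comp_def] using hval

theorem stmt_13_general (p : ℕ) [Fact p.Prime] (k : ℕ)
    (w : ℕ → ℕ) (hrec : Recurrent w) :
    ∃ m : ℕ, 1 ≤ m ∧
      (Aword (wordPrefix w m)).map (Int.cast : ℤ → ZMod (p ^ k)) = 1 := by
  have : NeZero (p ^ k) := ⟨pow_ne_zero k (Fact.out : p.Prime).ne_zero⟩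
  exact hrec.exists_map_Aword_wordPrefix_eq_one (ZMod (p ^ k))

/-- for a recurrent word `w` there is a nonempty prefix `w_m` with
`A_{w_m} ≡ Id (mod p^k)`. -/
theorem stmt_13 (p : ℕ) [Fact p.Prime] (k : ℕ) (hk : 1 ≤ k)
    (w : ℕ → ℕ) (hrec : Recurrent w) :
    ∃ m : ℕ, 1 ≤ m ∧
      (Aword (wordPrefix w m)).map (Int.cast : ℤ → ZMod (p ^ k)) = 1 :=
  stmt_13_general p k w hrec
end

section
/- Let p be a prime and v ∈ ℚ_p such that v is not the image of any rational number under the embedding ℚ → ℚ_p, and such that a·v² + b·v + c = 0 for some integers a, b, c not all zero. Then there exists ε > 0 such that for every pair of integers (a', b') ≠ (0,0): |a'·v + b'|_p / max(|v|_p, 1) ≥ ε / max(a'², b'²). -/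
open Matrix Filter

/-!
Let `v` be a root of `a X² + b X + c`; irrationality forces `a ≠ 0`. For integers `(x, y) ≠ 0`,
`X = x v + y` is a root of `a T² - (2 a y - b x) T + N`, where `N = c x² - b x y + a y²`, so
`N = X (2 a y - b x - a X)`. The integer `N` is nonzero because `X`, and with it the second
factor, is irrational, hence `|N|_p ≥ 1 / |N| ≥ 1 / ((|a| + |b| + |c|) max(x², y²))`, while
the ultrametric inequality gives `|N|_p ≤ |X|_p max(|v|_p, 1)`. Comparing the two bounds gives the claim with
`ε = 1 / ((|a| + |b| + |c|) max(|v|_p, 1)²)`.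
-/

section QuadraticIrrational

/-- `a (x v + y) (x v' + y)`, where `v, v'` are the roots of `a X² + b X + c`. -/
def quadNormForm (a b c x y : ℤ) : ℤ := c * x ^ 2 - b * x * y + a * y ^ 2

variable {a b c : ℤ}

theorem quadNormForm_eq_mul {R : Type*} [CommRing R] {v : R}
    (h : (a : R) * v ^ 2 + b * v + c = 0) (x y : ℤ) :
    (quadNormForm a b c x y : R) = (x * v + y) * (2 * a * y - b * x - a * (x * v + y)) := by
  unfold quadNormForm
  push_cast
  linear_combination (x : R) ^ 2 * h

variable {K : Type*} [Field K] [CharZero K] {v : K}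

theorem leading_coeff_ne_zero_of_irrational (hirr : ∀ r : ℚ, (r : K) ≠ v)
    (h0 : ¬(a = 0 ∧ b = 0 ∧ c = 0)) (h : (a : K) * v ^ 2 + b * v + c = 0) : a ≠ 0 := by
  rintro rfl
  by_cases hb : b = 0
  · subst hb
    simp only [Int.cast_zero, zero_mul, zero_add, Int.cast_eq_zero] at h
    exact h0 ⟨rfl, rfl, h⟩
  · apply hirr (-c / b)
    have hbK : (b : K) ≠ 0 := Int.cast_ne_zero.mpr hb
    push_cast
    field_simp
    linear_combination -h

theorem quadNormForm_ne_zero (hirr : ∀ r : ℚ, (r : K) ≠ v) (ha : a ≠ 0)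
    (h : (a : K) * v ^ 2 + b * v + c = 0) {x y : ℤ} (hxy : ¬(x = 0 ∧ y = 0)) :
    quadNormForm a b c x y ≠ 0 := by
  intro hN
  by_cases hx : x = 0
  · subst hx
    exact hxy ⟨rfl, by simpa [quadNormForm, ha] using hN⟩
  obtain ⟨r, hr⟩ : ∃ r : ℚ, (r : K) = x * v + y := by
    have haK : (a : K) ≠ 0 := Int.cast_ne_zero.mpr ha
    have := quadNormForm_eq_mul h x y
    rw [hN, Int.cast_zero, zero_eq_mul] at this
    rcases this with h1 | h2
    · exact ⟨0, by rw [h1, Rat.cast_zero]⟩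
    · refine ⟨(2 * a * y - b * x) / a, ?_⟩
      push_cast
      rw [div_eq_iff haK]
      linear_combination h2
  apply hirr ((r - y) / x)
  have hxK : (x : K) ≠ 0 := Int.cast_ne_zero.mpr hx
  push_cast
  rw [hr]
  field_simp
  ring

theorem abs_quadNormForm_le (a b c x y : ℤ) :
    |(quadNormForm a b c x y : ℝ)| ≤
      (|(a : ℝ)| + |(b : ℝ)| + |(c : ℝ)|) * max ((x : ℝ) ^ 2) ((y : ℝ) ^ 2) := by
  set M := max ((x : ℝ) ^ 2) ((y : ℝ) ^ 2)
  have hx : (x : ℝ) ^ 2 ≤ M := le_max_left _ _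
  have hy : (y : ℝ) ^ 2 ≤ M := le_max_right _ _
  have hxy : |(x : ℝ) * y| ≤ M := by
    rw [abs_mul]
    nlinarith [abs_nonneg (x : ℝ), abs_nonneg (y : ℝ), sq_abs (x : ℝ), sq_abs (y : ℝ)]
  unfold quadNormForm
  push_cast
  calc |(c : ℝ) * x ^ 2 - b * x * y + a * y ^ 2|
      ≤ |(c : ℝ) * x ^ 2| + |(b : ℝ) * x * y| + |(a : ℝ) * y ^ 2| :=
        (abs_add_le _ _).trans (add_le_add_left (abs_sub _ _) _)
    _ = |(c : ℝ)| * (x : ℝ) ^ 2 + |(b : ℝ)| * |(x : ℝ) * y| + |(a : ℝ)| * (y : ℝ) ^ 2 := by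
        simp only [abs_mul, abs_sq, mul_assoc]
    _ ≤ (|(a : ℝ)| + |(b : ℝ)| + |(c : ℝ)|) * M := by
        nlinarith [abs_nonneg (a : ℝ), abs_nonneg (b : ℝ), abs_nonneg (c : ℝ)]

end QuadraticIrrational

namespace IsUltrametricDist

variable {R : Type*} [SeminormedCommRing R] [NormOneClass R] [IsUltrametricDist R]

theorem norm_intCast_mul_add_intCast_le (v : R) (x y : ℤ) :
    ‖(x : R) * v + y‖ ≤ max ‖v‖ 1 := by
  refine (norm_add_le_max _ _).trans (max_le_max ?_ (norm_intCast_le_one R y))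
  exact (norm_mul_le _ _).trans (mul_le_of_le_one_left (norm_nonneg v) (norm_intCast_le_one R x))

theorem norm_quadNormForm_le {v : R} {a b c : ℤ} (h : (a : R) * v ^ 2 + b * v + c = 0)
    (x y : ℤ) : ‖(quadNormForm a b c x y : R)‖ ≤ ‖(x : R) * v + y‖ * max ‖v‖ 1 := by
  set X := (x : R) * v + y
  have hX : ‖X‖ ≤ max ‖v‖ 1 := norm_intCast_mul_add_intCast_le v x y
  have hcofactor : ‖2 * (a : R) * y - b * x - a * X‖ ≤ max ‖v‖ 1 := by
    rw [sub_eq_add_neg]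
    refine (norm_add_le_max _ _).trans (max_le ?_ ?_)
    · exact_mod_cast (norm_intCast_le_one R (2 * a * y - b * x)).trans (le_max_right _ _)
    · rw [norm_neg]
      exact (norm_mul_le _ _).trans (mul_le_of_le_one_left (norm_nonneg X)
        (norm_intCast_le_one R a) |>.trans hX)
  rw [quadNormForm_eq_mul h]
  exact (norm_mul_le _ _).trans (mul_le_mul_of_nonneg_left hcofactor (norm_nonneg X))

end IsUltrametricDist

theorem Padic.inv_abs_le_norm_intCast {p : ℕ} [Fact p.Prime] {n : ℤ} (hn : n ≠ 0) :
    |(n : ℝ)|⁻¹ ≤ ‖(n : ℚ_[p])‖ := by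
  rw [Padic.norm_eq_zpow_neg_valuation (Int.cast_ne_zero.mpr hn), Padic.valuation_intCast,
    _root_.zpow_neg, zpow_natCast]
  have hdvd : (p : ℤ) ^ padicValInt p n ∣ |n| := (dvd_abs _ _).mpr (padicValInt_dvd n)
  have hle : ((p ^ padicValInt p n : ℤ) : ℝ) ≤ ((|n| : ℤ) : ℝ) :=
    Int.cast_le.mpr (Int.le_of_dvd (abs_pos.mpr hn) hdvd)
  push_cast at hle
  exact inv_anti₀ (pow_pos (Nat.cast_pos.mpr (Fact.out : p.Prime).pos) _) hle

theorem Padic.inv_le_norm_intCast_mul_add_intCast {p : ℕ} [Fact p.Prime] {v : ℚ_[p]}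
    (hirr : ∀ r : ℚ, (r : ℚ_[p]) ≠ v) {a b c : ℤ} (ha : a ≠ 0)
    (h : (a : ℚ_[p]) * v ^ 2 + b * v + c = 0) {x y : ℤ} (hxy : ¬(x = 0 ∧ y = 0)) :
    ((|(a : ℝ)| + |(b : ℝ)| + |(c : ℝ)|) * max ((x : ℝ) ^ 2) ((y : ℝ) ^ 2) * max ‖v‖ 1)⁻¹ ≤
      ‖(x : ℚ_[p]) * v + y‖ := by
  have hN := quadNormForm_ne_zero hirr ha h hxy
  have hN_pos : 0 < |(quadNormForm a b c x y : ℝ)| := abs_pos.mpr (Int.cast_ne_zero.mpr hN)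
  have hD : 0 < max ‖v‖ 1 := lt_max_of_lt_right one_pos
  calc _ ≤ (|(quadNormForm a b c x y : ℝ)| * max ‖v‖ 1)⁻¹ := by
        gcongr
        exact abs_quadNormForm_le a b c x y
    _ = |(quadNormForm a b c x y : ℝ)|⁻¹ / max ‖v‖ 1 := by rw [mul_inv, div_eq_mul_inv]
    _ ≤ ‖(quadNormForm a b c x y : ℚ_[p])‖ / max ‖v‖ 1 := by
        gcongr
        exact inv_abs_le_norm_intCast hN
    _ ≤ ‖(x : ℚ_[p]) * v + y‖ :=
        div_le_of_le_mul₀ hD.le (norm_nonneg _) (IsUltrametricDist.norm_quadNormForm_le h x y)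

/-- a quadratic irrational `v ∈ ℚ_p` is `p`-adically badly
approximable. -/
theorem stmt_15 (p : ℕ) [Fact p.Prime] (v : ℚ_[p])
    (hirr : ∀ r : ℚ, (r : ℚ_[p]) ≠ v)
    (hquad : ∃ a b c : ℤ, ¬(a = 0 ∧ b = 0 ∧ c = 0) ∧
      (a : ℚ_[p]) * v ^ 2 + (b : ℚ_[p]) * v + (c : ℚ_[p]) = 0) :
    ∃ ε > 0, ∀ a' b' : ℤ, ¬(a' = 0 ∧ b' = 0) →
      ε / max ((a' : ℝ) ^ 2) ((b' : ℝ) ^ 2) ≤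
        ‖(a' : ℚ_[p]) * v + (b' : ℚ_[p])‖ / max ‖v‖ 1 := by
  obtain ⟨a, b, c, h0, h⟩ := hquad
  have ha := leading_coeff_ne_zero_of_irrational hirr h0 h
  set S := |(a : ℝ)| + |(b : ℝ)| + |(c : ℝ)|
  set D := max ‖v‖ 1
  have hS : 0 < S := by
    have : 0 < |(a : ℝ)| := abs_pos.mpr (Int.cast_ne_zero.mpr ha)
    positivity
  have hD : 0 < D := lt_max_of_lt_right one_pos
  refine ⟨(S * D ^ 2)⁻¹, by positivity, fun x y hxy => ?_⟩
  set M := max ((x : ℝ) ^ 2) ((y : ℝ) ^ 2)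
  have hM : 0 < M := by
    rcases not_and_or.mp hxy with hx | hy
    · exact lt_max_of_lt_left (by positivity)
    · exact lt_max_of_lt_right (by positivity)
  calc (S * D ^ 2)⁻¹ / M = (S * M * D)⁻¹ / D := by field_simp
    _ ≤ ‖(x : ℚ_[p]) * v + y‖ / D := by
      gcongr
      exact Padic.inv_le_norm_intCast_mul_add_intCast hirr ha h hxy
end

section
/- Let p be a prime and let x = (x₁,x₂) ∈ ℚ_p² be a nonzero vector lying in PBad. Then for every 2×2 integer matrix A with det A = 1 or −1, the vector A·x also lies in PBad. -/
open Matrix Filter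

/-! Put `y = A x`. For integers `a, b` the form `a y₀ + b y₁` equals `a' x₀ + b' x₁` with
`(a', b') = (a, b) A`, which is again nonzero and has `max (a'², b'²) ≤ K max (a², b²)` for a
constant `K` depending only on `A`. Since `A⁻¹` is also an integer matrix and integers have
`p`-adic norm at most one, `y` has the same max-norm as `x`. So `y ∈ PBad_{ε/K}` whenever
`x ∈ PBad_ε`. -/

section Ultrametric

variable {R : Type*} [SeminormedRing R] [NormOneClass R] [IsUltrametricDist R]

lemma norm_intCast_mul_add_le (a b : ℤ) (u v : R) : ‖(a : R) * u + b * v‖ ≤ max ‖u‖ ‖v‖ := by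
  have norm_intCast_mul_le (c : ℤ) (z : R) : ‖(c : R) * z‖ ≤ ‖z‖ :=
    (norm_mul_le _ _).trans
      (mul_le_of_le_one_left (norm_nonneg z) (IsUltrametricDist.norm_intCast_le_one R c))
  exact (IsUltrametricDist.norm_add_le_max _ _).trans
    (max_le_max (norm_intCast_mul_le a u) (norm_intCast_mul_le b v))

lemma max_norm_intMatrix_mulVec_le (M : Matrix (Fin 2) (Fin 2) ℤ) (x : Fin 2 → R) :
    max ‖(M.map (Int.cast : ℤ → R) *ᵥ x) 0‖ ‖(M.map (Int.cast : ℤ → R) *ᵥ x) 1‖ ≤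
      max ‖x 0‖ ‖x 1‖ := by
  simp only [mulVec, dotProduct, Fin.sum_univ_two, map_apply]
  exact max_le (norm_intCast_mul_add_le _ _ _ _) (norm_intCast_mul_add_le _ _ _ _)

lemma max_norm_intMatrix_mulVec_eq {A : Matrix (Fin 2) (Fin 2) ℤ} (hA : IsUnit A.det)
    (x : Fin 2 → R) :
    max ‖(A.map (Int.cast : ℤ → R) *ᵥ x) 0‖ ‖(A.map (Int.cast : ℤ → R) *ᵥ x) 1‖ =
      max ‖x 0‖ ‖x 1‖ := by
  refine le_antisymm (max_norm_intMatrix_mulVec_le A x) ?_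
  have hcast : (A⁻¹ * A).map (Int.cast : ℤ → R) = A⁻¹.map Int.cast * A.map Int.cast :=
    Matrix.map_mul (f := Int.castRingHom R)
  have hx : A⁻¹.map (Int.cast : ℤ → R) *ᵥ (A.map Int.cast *ᵥ x) = x := by
    rw [mulVec_mulVec, ← hcast, nonsing_inv_mul A hA, Matrix.map_one _ Int.cast_zero Int.cast_one,
      one_mulVec]
  conv_lhs => rw [← hx]
  exact max_norm_intMatrix_mulVec_le _ _

end Ultrametric

lemma intCast_mul_add_intMatrix_mulVec {R : Type*} [CommRing R] (a b : ℤ)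
    (A : Matrix (Fin 2) (Fin 2) ℤ) (x : Fin 2 → R) :
    (a : R) * (A.map Int.cast *ᵥ x) 0 + b * (A.map Int.cast *ᵥ x) 1 =
      ((![a, b] ᵥ* A) 0 : R) * x 0 + ((![a, b] ᵥ* A) 1 : R) * x 1 := by
  simp only [mulVec, vecMul, dotProduct, Fin.sum_univ_two, map_apply]
  push_cast
  ring

lemma vecMul_fin_two_ne_zero {A : Matrix (Fin 2) (Fin 2) ℤ} (hA : IsUnit A.det) {a b : ℤ}
    (hab : ¬(a = 0 ∧ b = 0)) : ¬((![a, b] ᵥ* A) 0 = 0 ∧ (![a, b] ᵥ* A) 1 = 0) := by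
  rintro ⟨h0, h1⟩
  have hv : ![a, b] ᵥ* A = 0 ᵥ* A := by
    ext i; fin_cases i <;> simp [h0, h1]
  have := vecMul_injective_of_isUnit ((isUnit_iff_isUnit_det A).mpr hA) hv
  exact hab ⟨congrFun this 0, congrFun this 1⟩

lemma sq_mul_add_mul_le (a b x y : ℝ) :
    (a * x + b * y) ^ 2 ≤ 2 * max (a ^ 2) (b ^ 2) * (x ^ 2 + y ^ 2) := by
  nlinarith [sq_nonneg (a * y - b * x), le_max_left (a ^ 2) (b ^ 2), le_max_right (a ^ 2) (b ^ 2),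
    sq_nonneg x, sq_nonneg y]

lemma max_sq_vecMul_le (A : Matrix (Fin 2) (Fin 2) ℤ) (a b : ℤ) :
    max (((![a, b] ᵥ* A) 0 : ℝ) ^ 2) (((![a, b] ᵥ* A) 1 : ℝ) ^ 2) ≤
      2 * (∑ i, ∑ j, (A i j : ℝ) ^ 2) * max ((a : ℝ) ^ 2) ((b : ℝ) ^ 2) := by
  simp only [vecMul, dotProduct, Fin.sum_univ_two]
  push_cast
  have hM : 0 ≤ max ((a : ℝ) ^ 2) ((b : ℝ) ^ 2) := le_max_of_le_left (sq_nonneg _)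
  refine max_le ((sq_mul_add_mul_le _ _ _ _).trans ?_) ((sq_mul_add_mul_le _ _ _ _).trans ?_)
  · nlinarith [mul_nonneg hM (sq_nonneg (A 0 1 : ℝ)), mul_nonneg hM (sq_nonneg (A 1 1 : ℝ))]
  · nlinarith [mul_nonneg hM (sq_nonneg (A 0 0 : ℝ)), mul_nonneg hM (sq_nonneg (A 1 0 : ℝ))]

lemma sum_sq_entries_pos {m n : Type*} [Fintype m] [Fintype n] {A : Matrix m n ℤ}
    (hA : A ≠ 0) : 0 < ∑ i, ∑ j, (A i j : ℝ) ^ 2 := by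
  obtain ⟨i, j, hij⟩ : ∃ i j, A i j ≠ 0 := by
    by_contra! h
    exact hA (Matrix.ext h)
  have hi : 0 < ∑ j, (A i j : ℝ) ^ 2 :=
    Finset.sum_pos' (fun _ _ => sq_nonneg _) ⟨j, Finset.mem_univ _, by positivity⟩
  exact Finset.sum_pos' (fun _ _ => Finset.sum_nonneg fun _ _ => sq_nonneg _)
    ⟨i, Finset.mem_univ _, hi⟩

theorem stmt_16_general (p : ℕ) [Fact p.Prime] (x : Fin 2 → ℚ_[p])
    (hPB : ∃ ε > 0, PBadE p ε x)
    (A : Matrix (Fin 2) (Fin 2) ℤ) (hdet : A.det = 1 ∨ A.det = -1) :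
    ∃ ε > 0, PBadE p ε (Matrix.mulVec (matQ p A) x) := by
  obtain ⟨ε, hε, hx⟩ := hPB
  have hA : IsUnit A.det := Int.isUnit_iff.mpr hdet
  set K : ℝ := 2 * ∑ i, ∑ j, (A i j : ℝ) ^ 2
  have hK : 0 < K := by
    have := sum_sq_entries_pos (A := A) (by rintro rfl; simp at hA)
    positivity
  refine ⟨ε / K, div_pos hε hK, fun a b hab => ?_⟩
  set c := ![a, b] ᵥ* A
  have hc : ¬(c 0 = 0 ∧ c 1 = 0) := vecMul_fin_two_ne_zero hA hab
  have hc_pos : 0 < max ((c 0 : ℝ) ^ 2) ((c 1 : ℝ) ^ 2) := by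
    rcases not_and_or.mp hc with h | h
    · exact lt_max_of_lt_left (by positivity)
    · exact lt_max_of_lt_right (by positivity)
  rw [matQ, intCast_mul_add_intMatrix_mulVec, max_norm_intMatrix_mulVec_eq hA, div_div]
  calc ε / (K * max ((a : ℝ) ^ 2) ((b : ℝ) ^ 2))
      ≤ ε / max ((c 0 : ℝ) ^ 2) ((c 1 : ℝ) ^ 2) :=
        div_le_div_of_nonneg_left hε.le hc_pos (max_sq_vecMul_le A a b)
    _ ≤ _ := hx (c 0) (c 1) hc

/-- `PBad` is invariant under unimodular integer matrices. -/
theorem stmt_16 (p : ℕ) [Fact p.Prime] (x : Fin 2 → ℚ_[p]) (hx : x ≠ 0)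
    (hPB : ∃ ε > 0, PBadE p ε x)
    (A : Matrix (Fin 2) (Fin 2) ℤ) (hdet : A.det = 1 ∨ A.det = -1) :
    ∃ ε > 0, PBadE p ε (Matrix.mulVec (matQ p A) x) :=
  stmt_16_general p x hPB A hdet
end
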